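/- If G is a connected graph, then diam(G) ≤ diam(T(G)) ≤ diam(G) + 1, where T(G) is the total graph of G. -/

import Mathlib

open Finset

/-- Total transformation graph `G^{xyz}` on vertex set `V(G) ∪ E(G)`. -/
def transGraph {V : Type*} (G : SimpleGraph V) (x y z : Bool) :
    SimpleGraph (V ⊕ G.edgeSet) where
  Adj a b :=
    match a, b with
    | Sum.inl u, Sum.inl v =>
        if x then G.Adj u v else (u ≠ v ∧ ¬ G.Adj u v)
    | Sum.inl v, Sum.inr e =>
        if z then v ∈ (e : Sym2 V) else v ∉ (e : Sym2 V)
    | Sum.inr e, Sum.inl v =>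
        if z then v ∈ (e : Sym2 V) else v ∉ (e : Sym2 V)
    | Sum.inr e, Sum.inr f =>
        if y then (e ≠ f ∧ ∃ v, v ∈ (e : Sym2 V) ∧ v ∈ (f : Sym2 V))
        else (e ≠ f ∧ ¬ ∃ v, v ∈ (e : Sym2 V) ∧ v ∈ (f : Sym2 V))
  symm := by
    constructor
    rintro (u | e) (v | f) h
    · cases x with
      | true => simpa using (by simpa using h : G.Adj u v).symm
      | false =>
        simp only [Bool.false_eq_true, if_false] at h ⊢
        exact ⟨h.1.symm, fun hc => h.2 hc.symm⟩
    · cases z <;> simpa using h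
    · cases z <;> simpa using h
    · cases y with
      | true =>
        simp only [if_pos rfl] at h ⊢
        exact ⟨h.1.symm, h.2.imp fun v hv => ⟨hv.2, hv.1⟩⟩
      | false =>
        simp only [Bool.false_eq_true, if_false] at h ⊢
        exact ⟨h.1.symm, fun ⟨v, hv⟩ => h.2 ⟨v, hv.2, hv.1⟩⟩
  loopless := by
    constructor
    rintro (u | e) h
    · cases x with
      | true => exact G.loopless.irrefl u (by simpa using h)
      | false => simp at h
    · cases y <;> simp at h

/-- The total graph `T(G) = G^{+++}`. -/
def totalGraph {V : Type*} (G : SimpleGraph V) : SimpleGraph (V ⊕ G.edgeSet) :=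
  transGraph G true true true

/-- Eccentricity of a vertex in a graph on a finite vertex type. -/
noncomputable def ecc {V : Type*} [Fintype V] (G : SimpleGraph V) (u : V) : ℕ :=
  Finset.univ.sup (G.dist u)

/-! Each vertex of `T(G)` stands for one or two vertices of `G` (itself, or the ends of an edge),
and along an edge of `T(G)` every representative of one side lies within distance one of a
representative of the other; so `T(G)` does not shorten distances between vertices of `G`, and
`ediam G ≤ ediam T(G)`. Conversely, a path `a = x₀, …, xₙ = c` between ends of edges `e` and `f`
gives the path `e, x₀x₁, …, xₙ₋₁xₙ, f` of length `n + 1` in `T(G)`, whence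
`ediam T(G) ≤ ediam G + 1`. These bounds force both extended diameters to be finite or both `⊤`,
so they pass to `diam = ediam.toNat`. -/

lemma ENat.toNat_le_toNat_and_le_add_one {a b : ℕ∞} (hab : a ≤ b) (hba : b ≤ a + 1) :
    a.toNat ≤ b.toNat ∧ b.toNat ≤ a.toNat + 1 := by
  induction a using ENat.recTopCoe with
  | top => simp [top_le_iff.mp hab]
  | coe n =>
    lift b to ℕ using ne_top_of_le_ne_top (by simp) hba
    rw [ENat.toNat_natCast, ENat.toNat_natCast]
    exact ⟨mod_cast hab, mod_cast hba⟩

namespace SimpleGraph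

variable {V : Type*} {G : SimpleGraph V}

lemma edist_le_one_of_mem_edgeSet {e : Sym2 V} (he : e ∈ G.edgeSet) {a b : V} (ha : a ∈ e)
    (hb : b ∈ e) : G.edist a b ≤ 1 := by
  rw [edist_le_one_iff_adj_or_eq]
  by_cases hab : a = b
  · exact .inr hab
  · rw [(Sym2.mem_and_mem_iff hab).mp ⟨ha, hb⟩] at he
    exact .inl he

end SimpleGraph

open SimpleGraph

section TotalGraph

variable {V : Type*} {G : SimpleGraph V}

def totalGraphEnds : V ⊕ G.edgeSet → Set V
  | .inl u => {u}
  | .inr e => (e : Sym2 V)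

lemma totalGraph_edist_inr_inr_le_one {e f : G.edgeSet} {a : V} (he : a ∈ (e : Sym2 V))
    (hf : a ∈ (f : Sym2 V)) : (totalGraph G).edist (.inr e) (.inr f) ≤ 1 := by
  rw [edist_le_one_iff_adj_or_eq]
  by_cases hef : e = f
  · exact .inr (congrArg _ hef)
  · exact .inl ⟨hef, a, he, hf⟩

lemma totalGraph_edist_inl_inr_eq_one {e : G.edgeSet} {a : V} (ha : a ∈ (e : Sym2 V)) :
    (totalGraph G).edist (.inl a) (.inr e) = 1 :=
  edist_eq_one_iff_adj.mpr (show (totalGraph G).Adj _ _ from ha)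

lemma exists_mem_totalGraphEnds_edist_le_one {x y : V ⊕ G.edgeSet} (hxy : (totalGraph G).Adj x y)
    {w : V} (hw : w ∈ totalGraphEnds x) : ∃ w' ∈ totalGraphEnds y, G.edist w w' ≤ 1 := by
  match x, y, hxy, hw with
  | .inl _, .inl v, hxy, rfl => exact ⟨v, rfl, (edist_eq_one_iff_adj (G := G)).mpr hxy |>.le⟩
  | .inl _, .inr _, hxy, rfl => exact ⟨w, hxy, by simp⟩
  | .inr e, .inl v, hxy, hw => exact ⟨v, rfl, edist_le_one_of_mem_edgeSet e.2 hw hxy⟩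
  | .inr e, .inr _, ⟨_, s, hse, hsf⟩, hw => exact ⟨s, hsf, edist_le_one_of_mem_edgeSet e.2 hw hse⟩

lemma exists_mem_totalGraphEnds_edist_le_length {x y : V ⊕ G.edgeSet}
    (p : (totalGraph G).Walk x y) {w : V} (hw : w ∈ totalGraphEnds x) :
    ∃ w' ∈ totalGraphEnds y, G.edist w w' ≤ p.length := by
  induction p generalizing w with
  | nil => exact ⟨w, hw, by simp⟩
  | cons h q ih =>
    obtain ⟨w₁, hw₁, h₁⟩ := exists_mem_totalGraphEnds_edist_le_one h hw
    obtain ⟨w₂, hw₂, h₂⟩ := ih hw₁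
    refine ⟨w₂, hw₂, ?_⟩
    calc G.edist w w₂ ≤ G.edist w w₁ + G.edist w₁ w₂ := SimpleGraph.edist_triangle
      _ ≤ 1 + q.length := add_le_add h₁ h₂
      _ = (q.cons h).length := by simp [add_comm]

lemma totalGraph_edist_inl_inl (u v : V) :
    (totalGraph G).edist (.inl u) (.inl v) = G.edist u v := by
  apply le_antisymm
  · exact le_iInf fun p => (p.map ⟨Sum.inl, id⟩).edist_le.trans_eq (by simp)
  · refine le_iInf fun p => ?_
    obtain ⟨_, rfl, h⟩ := exists_mem_totalGraphEnds_edist_le_length p (rfl : u ∈ ({u} : Set V))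
    exact h

lemma totalGraph_edist_inr_inr_le_length {a c : V} (p : G.Walk a c) {e f : G.edgeSet}
    (ha : a ∈ (e : Sym2 V)) (hc : c ∈ (f : Sym2 V)) :
    (totalGraph G).edist (.inr e) (.inr f) ≤ p.length + 1 := by
  induction p generalizing e with
  | nil => simpa using totalGraph_edist_inr_inr_le_one ha hc
  | @cons a b _ hab q ih =>
    let e' : G.edgeSet := ⟨s(a, b), hab⟩
    calc (totalGraph G).edist (.inr e) (.inr f)
        ≤ (totalGraph G).edist (.inr e) (.inr e') + (totalGraph G).edist (.inr e') (.inr f) :=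
          SimpleGraph.edist_triangle
      _ ≤ 1 + (q.length + 1) :=
          add_le_add (totalGraph_edist_inr_inr_le_one ha (Sym2.mem_mk_left a b))
            (ih (Sym2.mem_mk_right a b) hc)
      _ = (q.cons hab).length + 1 := by simp [add_comm]

lemma totalGraph_edist_inr_inr_le {a c : V} {e f : G.edgeSet} (ha : a ∈ (e : Sym2 V))
    (hc : c ∈ (f : Sym2 V)) : (totalGraph G).edist (.inr e) (.inr f) ≤ G.edist a c + 1 := by
  rw [show G.edist a c = ⨅ p : G.Walk a c, (p.length : ℕ∞) from rfl, ENat.iInf_add]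
  exact le_iInf fun p => totalGraph_edist_inr_inr_le_length p ha hc

lemma totalGraph_edist_inl_inr_le {a : V} {e : G.edgeSet} (u : V) (ha : a ∈ (e : Sym2 V)) :
    (totalGraph G).edist (.inl u) (.inr e) ≤ G.edist u a + 1 :=
  calc (totalGraph G).edist (.inl u) (.inr e)
      ≤ (totalGraph G).edist (.inl u) (.inl a) + (totalGraph G).edist (.inl a) (.inr e) :=
        SimpleGraph.edist_triangle
    _ = G.edist u a + 1 := by rw [totalGraph_edist_inl_inl, totalGraph_edist_inl_inr_eq_one ha]

lemma ediam_le_totalGraph_ediam (G : SimpleGraph V) : G.ediam ≤ (totalGraph G).ediam :=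
  ediam_le_of_edist_le fun u v => totalGraph_edist_inl_inl (G := G) u v ▸ edist_le_ediam

lemma totalGraph_ediam_le (G : SimpleGraph V) : (totalGraph G).ediam ≤ G.ediam + 1 := by
  have h_end (e : G.edgeSet) : (e : Sym2 V).out.1 ∈ (e : Sym2 V) := Sym2.out_fst_mem _
  refine ediam_le_of_edist_le ?_
  rintro (u | e) (v | f)
  · exact (totalGraph_edist_inl_inl u v).trans_le (edist_le_ediam.trans le_self_add)
  · exact (totalGraph_edist_inl_inr_le u (h_end f)).trans (by gcongr; exact edist_le_ediam)
  · rw [edist_comm]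
    exact (totalGraph_edist_inl_inr_le v (h_end e)).trans (by gcongr; exact edist_le_ediam)
  · exact (totalGraph_edist_inr_inr_le (h_end e) (h_end f)).trans
      (by gcongr; exact edist_le_ediam)

end TotalGraph

open scoped Classical

theorem totalGraph_diam_general {V : Type*} (G : SimpleGraph V) :
    G.diam ≤ (totalGraph G).diam ∧ (totalGraph G).diam ≤ G.diam + 1 :=
  ENat.toNat_le_toNat_and_le_add_one (ediam_le_totalGraph_ediam G) (totalGraph_ediam_le G)

/-- For a connected graph `G` with an edge, `diam(G) ≤ diam(T(G)) ≤ diam(G) + 1`. -/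
theorem totalGraph_diam {V : Type*} [Fintype V] [DecidableEq V]
    (G : SimpleGraph V) [DecidableRel G.Adj]
    (hG : G.Connected) (hne : G.edgeSet.Nonempty) :
    G.diam ≤ (totalGraph G).diam ∧ (totalGraph G).diam ≤ G.diam + 1 :=
  totalGraph_diam_general G
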